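/- arXiv:1806.04840 — 6 statements merged into one kernel-verified Lean document; each statement's English description precedes it below -/
import Mathlib

section
/- Define Q, R: ℚ ∩ (0,1) → ℤ[t, t⁻¹] recursively by Q_{1/2} = 1, R_{1/2} = 0, Q_{1/3} = -t⁻¹, R_{1/3} = -t, Q_{2/3} = -t, R_{2/3} = -t⁻¹, and Q_x = -t·Q_y - t⁻¹·Q_z, R_x = -t·R_y - t⁻¹·R_z whenever (y, z) is the pair of parents of x. Then for every irreducible fraction p/q ∈ (0,1) with 2p < q, Q_{p/q}(-1) = p and Q_{p/q}(-1) + R_{p/q}(-1) = q - p. -/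
/-!
At `t = -1` the recursion reads `f x = f y + f z`: the evaluated `Q` and `Q + R` are additive
over Farey parents. Numerator and denominator are additive over mediants as well, so by strong
induction on the denominator such an `f` is an affine function of (numerator, denominator),
pinned down by its values at `0 = 0/1` and `1/2`. The induction stays inside `[0, 1/2]`
because both parents of a fraction below `1/2` lie in `[0, 1/2]`.
-/

open LaurentPolynomial

/-- `QParents y z x` : (y, z) are Farey neighbors a/b, c/d with b*c - a*d = 1
(positive denominators) whose mediant is x. -/
def QParents (y z x : ℚ) : Prop :=
  ∃ p q r s : ℤ, 0 < q ∧ 0 < s ∧ q * r - p * s = 1 ∧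
    y = (p : ℚ) / q ∧ z = (r : ℚ) / s ∧ x = ((p : ℚ) + r) / ((q : ℚ) + s)

lemma map_neg_T_one_mul_sub_T_neg_one_mul {R S : Type*} [CommRing R] [CommRing S]
    (ev : R[T;T⁻¹] →+* S) (hev : ev (T 1) = -1) (u v : R[T;T⁻¹]) :
    ev (-T 1 * u - T (-1) * v) = ev u + ev v := by
  have hinv : ev (T (-1)) = -1 := by
    have h := congrArg ev (T_add (R := R) (-1) 1)
    rw [map_mul, hev, neg_add_cancel, T_zero, map_one] at h
    linear_combination h
  simp only [map_sub, map_mul, map_neg, hev, hinv]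
  ring

lemma coprime_of_mul_sub_mul_eq_one {a b c d : ℕ} (h : (b : ℤ) * c - a * d = 1) :
    a.Coprime b ∧ c.Coprime d :=
  ⟨Nat.isCoprime_iff_coprime.mp ⟨-d, c, by linear_combination h⟩,
    Nat.isCoprime_iff_coprime.mp ⟨b, -a, by linear_combination h⟩⟩

lemma qParents_of_mul_sub_mul_eq_one {a b c d : ℕ} (hb : 0 < b) (hd : 0 < d)
    (h : (b : ℤ) * c - a * d = 1) :
    QParents (a / b) (c / d) ((a + c : ℕ) / (b + d : ℕ)) :=
  ⟨a, b, c, d, by omega, by omega, h, by simp, by simp, by push_cast; rfl⟩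

lemma exists_farey_parents {a b : ℕ} (hab : a.Coprime b) (hb : 1 < b) :
    ∃ a' b' c d : ℕ, a = a' + c ∧ b = b' + d ∧ 0 < b' ∧ 0 < d ∧ (b' : ℤ) * c - a' * d = 1 := by
  obtain ⟨u, v, huv⟩ := Nat.isCoprime_iff_coprime.mpr hab
  -- reduce the Bézout coefficient of `a` modulo `b` to get `0 ≤ d < b`
  set d := -u % b
  set c := v - a * (-u / b)
  have hdet : (b : ℤ) * c - a * d = 1 := by
    linear_combination huv - (a : ℤ) * Int.mul_ediv_add_emod (-u) b
  have hd0 : 0 ≤ d := Int.emod_nonneg _ (by omega)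
  have hdb : d < b := Int.emod_lt_of_pos _ (by omega)
  have hd : 0 < d := by
    refine lt_of_le_of_ne hd0 fun h => ?_
    rw [← h, mul_zero, sub_zero] at hdet
    have := Int.eq_one_of_mul_eq_one_right (by omega) hdet
    omega
  have hc0 : 0 ≤ c := by nlinarith
  have hca : c ≤ a := by nlinarith
  clear_value c d
  lift c to ℕ using hc0
  lift d to ℕ using hd0
  refine ⟨a - c, b - d, c, d, by omega, by omega, by omega, by omega, ?_⟩
  push_cast [show c ≤ a by omega, show d ≤ b by omega]
  linear_combination hdet

lemma two_mul_le_of_two_mul_mediant_lt {a b c d : ℕ} (hd : 0 < d)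
    (h : (b : ℤ) * c - a * d = 1) (hmed : 2 * (a + c) < b + d) :
    2 * a ≤ b ∧ 2 * c ≤ d := by
  have hmed' : 2 * ((a : ℤ) + c) + 1 ≤ b + d := by exact_mod_cast hmed
  constructor
  · have : 2 * (a : ℤ) < b := by nlinarith
    omega
  · have : 2 * (c : ℤ) ≤ d := by nlinarith
    omega

theorem apply_div_eq_of_add_on_qParents (f : ℚ → ℤ) (m n : ℤ) (h0 : f 0 = n)
    (hhalf : f (1 / 2) = m + 2 * n)
    (hrec : ∀ x y z, QParents y z x → x ≠ 1 / 2 → f x = f y + f z)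
    {a b : ℕ} (hab : a.Coprime b) (h2 : 2 * a ≤ b) : f (a / b) = m * a + n * b := by
  induction b using Nat.strong_induction_on generalizing a with
  | _ b ih =>
  obtain rfl | ha := Nat.eq_zero_or_pos a
  · obtain rfl : b = 1 := (Nat.coprime_zero_left b).mp hab
    simpa using h0
  obtain h2 | h2 := h2.eq_or_lt
  · obtain rfl : a = 1 := hab.eq_one_of_dvd (h2 ▸ dvd_mul_left a 2)
    subst h2
    rw [show ((1 : ℕ) : ℚ) / (2 * 1 : ℕ) = 1 / 2 by norm_num, hhalf]
    push_cast
    ring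
  obtain ⟨a', b', c, d, rfl, rfl, hb', hd, hdet⟩ := exists_farey_parents hab (by omega)
  obtain ⟨hy, hz⟩ := two_mul_le_of_two_mul_mediant_lt hd hdet h2
  obtain ⟨hcy, hcz⟩ := coprime_of_mul_sub_mul_eq_one hdet
  have hne : ((a' + c : ℕ) : ℚ) / (b' + d : ℕ) ≠ 1 / 2 := by
    rw [ne_eq, div_eq_div_iff (by positivity) two_ne_zero]
    exact_mod_cast (by omega : (a' + c) * 2 ≠ 1 * (b' + d))
  rw [hrec _ _ _ (qParents_of_mul_sub_mul_eq_one hb' hd hdet) hne, ih b' (by omega) hcy hy,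
    ih d (by omega) hcz hz]
  push_cast
  ring

theorem eval_Q_R_at_neg_one_general (Q R : ℚ → LaurentPolynomial ℤ)
    (hQ0 : Q 0 = 0) (hR0 : R 0 = 1)
    (hQh : Q (1/2) = 1) (hRh : R (1/2) = 0)
    (hQrec : ∀ x y z : ℚ, QParents y z x → x ≠ 1/2 →
      Q x = -T 1 * Q y - T (-1) * Q z)
    (hRrec : ∀ x y z : ℚ, QParents y z x → x ≠ 1/2 →
      R x = -T 1 * R y - T (-1) * R z)
    (p q : ℕ) (hcop : Nat.Coprime p q) (hq : 2 * p < q)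
    (ev : LaurentPolynomial ℤ →+* ℤ) (hev : ev (T 1) = -1) :
    ev (Q ((p : ℚ) / q)) = p ∧
      ev (Q ((p : ℚ) / q)) + ev (R ((p : ℚ) / q)) = (q : ℤ) - p := by
  have hQ := apply_div_eq_of_add_on_qParents (fun x => ev (Q x)) 1 0 (by simp [hQ0])
    (by rw [hQh, map_one]; rfl) (fun x y z hp hx => by
      simp only [hQrec x y z hp hx, map_neg_T_one_mul_sub_T_neg_one_mul ev hev]) hcop hq.le
  have hQR := apply_div_eq_of_add_on_qParents (fun x => ev (Q x) + ev (R x)) (-1) 1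
    (by simp [hQ0, hR0]) (by rw [hQh, hRh]; simp) (fun x y z hp hx => by
      simp only [hQrec x y z hp hx, hRrec x y z hp hx, map_neg_T_one_mul_sub_T_neg_one_mul ev hev]
      ring) hcop hq.le
  exact ⟨by simpa using hQ, by linarith⟩

/-- Let Q, R : ℚ → ℤ[t,t⁻¹] satisfy the base cases Q₀ = Q₁ = 0, R₀ = R₁ = 1,
Q_{1/2} = 1, R_{1/2} = 0, Q_{1/3} = -t⁻¹, R_{1/3} = -t, Q_{2/3} = -t, R_{2/3} = -t⁻¹
and the recursion Q_x = -t·Q_y - t⁻¹·Q_z, R_x = -t·R_y - t⁻¹·R_z whenever (y,z) is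
the pair of parents of x (other than 1/2). Then for every irreducible fraction
p/q ∈ (0,1) with 2p < q, evaluating at t = -1 gives Q_{p/q}(-1) = p and
Q_{p/q}(-1) + R_{p/q}(-1) = q - p. (Here `T 1` plays the role of t.) -/
theorem eval_Q_R_at_neg_one (Q R : ℚ → LaurentPolynomial ℤ)
    (hQ0 : Q 0 = 0) (hR0 : R 0 = 1) (hQ1 : Q 1 = 0) (hR1 : R 1 = 1)
    (hQh : Q (1/2) = 1) (hRh : R (1/2) = 0)
    (hQ3 : Q (1/3) = -T (-1)) (hR3 : R (1/3) = -T 1)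
    (hQ23 : Q (2/3) = -T 1) (hR23 : R (2/3) = -T (-1))
    (hQrec : ∀ x y z : ℚ, QParents y z x → x ≠ 1/2 →
      Q x = -T 1 * Q y - T (-1) * Q z)
    (hRrec : ∀ x y z : ℚ, QParents y z x → x ≠ 1/2 →
      R x = -T 1 * R y - T (-1) * R z)
    (p q : ℕ) (hcop : Nat.Coprime p q) (hp : 0 < p) (hq : 2 * p < q)
    (ev : LaurentPolynomial ℤ →+* ℤ) (hev : ev (T 1) = -1) :
    ev (Q ((p : ℚ) / q)) = p ∧
      ev (Q ((p : ℚ) / q)) + ev (R ((p : ℚ) / q)) = (q : ℤ) - p :=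
  eval_Q_R_at_neg_one_general Q R hQ0 hR0 hQh hRh hQrec hRrec p q hcop hq ev hev
end

section
/- With w as the LR-word map on ℚ ∩ (0,1) defined via the Stern-Brocot recursion, for an irreducible fraction p/q ∈ (0,1) with word w = w(p/q): appending L gives w·L = w(p/(p+q)), and appending R gives w·R = w(q/(2q-p)). -/
/-- The two-letter alphabet of LR words. -/
inductive LR
  | L : LR
  | R : LR
  deriving DecidableEq

/-- The operation `i` on LR words: swap every L with R. -/
def iop : List LR → List LR :=
  List.map fun x => match x with | LR.L => LR.R | LR.R => LR.L

/-- `FareyPair y z x` : (y, z) are Farey neighbors p/q, r/s with q*r - p*s = 1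
(positive denominators) whose mediant is x. -/
def FareyPair (y z x : ℚ) : Prop :=
  ∃ p q r s : ℤ, 0 < q ∧ 0 < s ∧ q * r - p * s = 1 ∧
    y = (p : ℚ) / q ∧ z = (r : ℚ) / s ∧ x = ((p : ℚ) + r) / ((q : ℚ) + s)

/-- The Stern–Brocot LR-word relation: `SB α w` says that w is the LR word `w(α)`
of the rational α ∈ (0,1), for the tree rooted at 1/2.  The word of 1/2 is empty,
and for a mediant x of Farey-neighbor parents (y, z) with words w₁, w₂, the word
of x is L·w₂ if ℓ(w₁) < ℓ(w₂) and R·w₁ if ℓ(w₁) > ℓ(w₂); if the parent y (resp. z)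
is the endpoint 0/1 (resp. 1/1), the word of x is L·w₂ (resp. R·w₁). -/
inductive SB : ℚ → List LR → Prop
  | half : SB (1/2) []
  | left (y z x : ℚ) (w₁ w₂ : List LR) : FareyPair y z x → SB y w₁ → SB z w₂ →
      w₁.length < w₂.length → SB x (LR.L :: w₂)
  | right (y z x : ℚ) (w₁ w₂ : List LR) : FareyPair y z x → SB y w₁ → SB z w₂ →
      w₂.length < w₁.length → SB x (LR.R :: w₁)
  | lbase (z x : ℚ) (w₂ : List LR) : FareyPair 0 z x → SB z w₂ → SB x (LR.L :: w₂)
  | rbase (y x : ℚ) (w₁ : List LR) : FareyPair y 1 x → SB y w₁ → SB x (LR.R :: w₁)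

lemma div_L {a b : ℚ} (hb : 0 < b) (hab : 0 < a + b) :
    (a/b)/((a/b)+1) = a/(a+b) := by
  have e : a/b + 1 = (a+b)/b := by field_simp
  rw [e, div_div_div_cancel_right₀ hb.ne' a (a+b)]

lemma div_R {a b : ℚ} (hb : 0 < b) (h : 0 < 2*b - a) :
    1/(2 - a/b) = b/(2*b-a) := by
  have e : 2 - a/b = (2*b-a)/b := by rw [eq_div_iff hb.ne', sub_mul, div_mul_cancel₀ _ hb.ne']
  rw [e, one_div_div]

lemma FareyPair_mem {y z x : ℚ} (h : FareyPair y z x)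
    (hy0 : 0 ≤ y) (hy1 : y < 1) (hz0 : 0 < z) (hz1 : z ≤ 1) : 0 < x ∧ x < 1 := by
  obtain ⟨p, q, r, s, hq, hs, hdet, hy, hz, hx⟩ := h
  have hq' : (0:ℚ) < q := by exact_mod_cast hq
  have hs' : (0:ℚ) < s := by exact_mod_cast hs
  have hp0 : (0:ℚ) ≤ p := by
    have := hy0; rw [hy, le_div_iff₀ hq'] at this; simpa using this
  have hpq : (p:ℚ) < q := by
    have := hy1; rw [hy, div_lt_one hq'] at this; exact this
  have hr0 : (0:ℚ) < r := by
    have := hz0; rw [hz, lt_div_iff₀ hs'] at this; simpa using this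
  have hrs : (r:ℚ) ≤ s := by
    have := hz1; rw [hz, div_le_one hs'] at this; exact this
  subst hx
  constructor
  · apply div_pos <;> linarith
  · rw [div_lt_one (by linarith)]; linarith

lemma SB_mem {α : ℚ} {w : List LR} (h : SB α w) : 0 < α ∧ α < 1 := by
  induction h with
  | half => norm_num
  | left y z x w₁ w₂ hf hy hz hlen ihy ihz =>
      exact FareyPair_mem hf ihy.1.le ihy.2 ihz.1 ihz.2.le
  | right y z x w₁ w₂ hf hy hz hlen ihy ihz =>
      exact FareyPair_mem hf ihy.1.le ihy.2 ihz.1 ihz.2.le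
  | lbase z x w₂ hf hz ihz =>
      exact FareyPair_mem hf le_rfl one_pos ihz.1 ihz.2.le
  | rbase y x w₁ hf hy ihy =>
      exact FareyPair_mem hf ihy.1.le ihy.2 one_pos le_rfl

lemma FareyPair_map {y z x : ℚ} (h : FareyPair y z x)
    (hy0 : 0 ≤ y) (hy1 : y < 1) (hz0 : 0 < z) (hz1 : z ≤ 1) :
    FareyPair (y/(y+1)) (z/(z+1)) (x/(x+1)) ∧
      FareyPair (1/(2-y)) (1/(2-z)) (1/(2-x)) := by
  obtain ⟨p, q, r, s, hq, hs, hdet, hy, hz, hx⟩ := h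
  have hq' : (0:ℚ) < q := by exact_mod_cast hq
  have hs' : (0:ℚ) < s := by exact_mod_cast hs
  have hp0 : (0:ℚ) ≤ p := by
    have := hy0; rw [hy, le_div_iff₀ hq'] at this; simpa using this
  have hpq : (p:ℚ) < q := by
    have := hy1; rw [hy, div_lt_one hq'] at this; exact this
  have hr0 : (0:ℚ) < r := by
    have := hz0; rw [hz, lt_div_iff₀ hs'] at this; simpa using this
  have hrs : (r:ℚ) ≤ s := by
    have := hz1; rw [hz, div_le_one hs'] at this; exact this
  have hp0' : (0:ℤ) ≤ p := by exact_mod_cast hp0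
  have hpq' : p < q := by exact_mod_cast hpq
  have hr0' : (0:ℤ) < r := by exact_mod_cast hr0
  have hrs' : r ≤ s := by exact_mod_cast hrs
  subst hy hz hx
  constructor
  · refine ⟨p, p + q, r, r + s, by omega, by omega, by linear_combination hdet, ?_, ?_, ?_⟩
    · push_cast
      rw [div_L hq' (by linarith)]
    · push_cast
      rw [div_L hs' (by linarith)]
    · push_cast
      rw [div_L (by linarith : (0:ℚ) < (q:ℚ)+s) (by linarith)]
      congr 1
      ring
  · refine ⟨q, 2*q - p, s, 2*s - r, by omega, by omega, by linear_combination hdet, ?_, ?_, ?_⟩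
    · push_cast
      rw [div_R hq' (by linarith)]
    · push_cast
      rw [div_R hs' (by linarith)]
    · push_cast
      rw [div_R (by linarith : (0:ℚ) < (q:ℚ)+s) (by linarith)]
      congr 1
      ring

lemma SB_step {α : ℚ} {w : List LR} (h : SB α w) :
    SB (α/(α+1)) (w ++ [LR.L]) ∧ SB (1/(2-α)) (w ++ [LR.R]) := by
  induction h with
  | half =>
      rw [show ((1:ℚ)/2)/((1:ℚ)/2+1) = 1/3 by norm_num,
          show (1:ℚ)/(2-(1:ℚ)/2) = 2/3 by norm_num]
      constructor
      · exact SB.lbase (1/2) (1/3) []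
          ⟨0, 1, 1, 2, by norm_num, by norm_num, by norm_num, by norm_num, by norm_num, by norm_num⟩
          SB.half
      · exact SB.rbase (1/2) (2/3) []
          ⟨1, 2, 1, 1, by norm_num, by norm_num, by norm_num, by norm_num, by norm_num, by norm_num⟩
          SB.half
  | left y z x w₁ w₂ hf hy hz hlen ihy ihz =>
      have my := SB_mem hy; have mz := SB_mem hz
      have hm := FareyPair_map hf my.1.le my.2 mz.1 mz.2.le
      exact ⟨SB.left _ _ _ _ _ hm.1 ihy.1 ihz.1 (by simpa using hlen),
             SB.left _ _ _ _ _ hm.2 ihy.2 ihz.2 (by simpa using hlen)⟩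
  | right y z x w₁ w₂ hf hy hz hlen ihy ihz =>
      have my := SB_mem hy; have mz := SB_mem hz
      have hm := FareyPair_map hf my.1.le my.2 mz.1 mz.2.le
      exact ⟨SB.right _ _ _ _ _ hm.1 ihy.1 ihz.1 (by simpa using hlen),
             SB.right _ _ _ _ _ hm.2 ihy.2 ihz.2 (by simpa using hlen)⟩
  | lbase z x w₂ hf hz ihz =>
      have mz := SB_mem hz
      have hm := FareyPair_map hf le_rfl one_pos mz.1 mz.2.le
      constructor
      · have h1 := hm.1
        rw [show (0:ℚ)/(0+1) = 0 by norm_num] at h1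
        exact SB.lbase _ _ _ h1 ihz.1
      · have h2 := hm.2
        rw [show (1:ℚ)/(2-0) = 1/2 by norm_num] at h2
        exact SB.left _ _ _ [] _ h2 SB.half ihz.2 (by simp)
  | rbase y x w₁ hf hy ihy =>
      have my := SB_mem hy
      have hm := FareyPair_map hf my.1.le my.2 one_pos le_rfl
      constructor
      · have h1 := hm.1
        rw [show (1:ℚ)/(1+1) = 1/2 by norm_num] at h1
        exact SB.right _ _ _ _ [] h1 ihy.1 SB.half (by simp)
      · have h2 := hm.2
        rw [show (1:ℚ)/(2-1) = 1 by norm_num] at h2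
        exact SB.rbase _ _ _ h2 ihy.2

/-- For an irreducible fraction p/q ∈ (0,1) with LR word w = w(p/q): appending L
gives w·L = w(p/(p+q)) and appending R gives w·R = w(q/(2q-p)). -/
theorem SB_append_letter (p q : ℕ) (hcop : Nat.Coprime p q) (hp : 0 < p) (hq : p < q)
    (w : List LR) (hw : SB ((p : ℚ) / q) w) :
    SB ((p : ℚ) / ((p : ℚ) + q)) (w ++ [LR.L]) ∧
      SB ((q : ℚ) / (2 * (q : ℚ) - p)) (w ++ [LR.R]) := by
  have h := SB_step hw
  have hp0 : (0:ℚ) < p := by exact_mod_cast hp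
  have hq0 : (0:ℚ) < q := by exact_mod_cast hp.trans hq
  have hpq : (p:ℚ) < q := by exact_mod_cast hq
  rw [div_L hq0 (by linarith), div_R hq0 (by linarith)] at h
  exact h
end

section
/- Let r denote word reversal and i the L↔R swap on LR words. Let α = x/y ∈ ℚ ∩ (0,1) be irreducible with pair of parents (p/q, r/s) (so qr - ps = 1 and x = p+r, y = q+s). If w = w(x/y) is the LR word of α, then r(w) = w(q/y) and (i∘r)(w) = w(s/y). -/
open Matrix

namespace LR

def toMatrix : LR → Matrix (Fin 2) (Fin 2) ℤ
  | L => !![1, 1; 0, 1]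
  | R => !![1, 0; 1, 1]

theorem det_toMatrix (x : LR) : x.toMatrix.det = 1 := by
  cases x <;> simp [toMatrix, det_fin_two_of]

theorem isUnit_toMatrix (x : LR) : IsUnit x.toMatrix :=
  (isUnit_iff_isUnit_det _).2 (by simp [det_toMatrix])

end LR

/-- The first letter of `w` is the last step of the descent in the tree, hence the multiplication
on the right. -/
def wordMatrix : List LR → Matrix (Fin 2) (Fin 2) ℤ
  | [] => 1
  | x :: w => wordMatrix w * x.toMatrix

section wordMatrix

variable (w : List LR)

theorem wordMatrix_cons_L : wordMatrix (.L :: w) =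
    !![wordMatrix w 0 0, wordMatrix w 0 0 + wordMatrix w 0 1;
      wordMatrix w 1 0, wordMatrix w 1 0 + wordMatrix w 1 1] := by
  ext i j
  fin_cases i <;> fin_cases j <;> simp [wordMatrix, LR.toMatrix, mul_apply, Fin.sum_univ_two]

theorem wordMatrix_cons_R : wordMatrix (.R :: w) =
    !![wordMatrix w 0 0 + wordMatrix w 0 1, wordMatrix w 0 1;
      wordMatrix w 1 0 + wordMatrix w 1 1, wordMatrix w 1 1] := by
  ext i j
  fin_cases i <;> fin_cases j <;> simp [wordMatrix, LR.toMatrix, mul_apply, Fin.sum_univ_two]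

theorem wordMatrix_det :
    wordMatrix w 0 0 * wordMatrix w 1 1 - wordMatrix w 0 1 * wordMatrix w 1 0 = 1 := by
  rw [← det_fin_two]
  induction w with
  | nil => simp [wordMatrix]
  | cons x w ih => simp [wordMatrix, ih, LR.det_toMatrix]

theorem wordMatrix_entry_bounds :
    1 ≤ wordMatrix w 0 0 ∧ 0 ≤ wordMatrix w 0 1 ∧ 0 ≤ wordMatrix w 1 0 ∧ 1 ≤ wordMatrix w 1 1 := by
  induction w with
  | nil => simp [wordMatrix]
  | cons x w ih =>
    cases x
    · simp only [wordMatrix_cons_L, of_apply, cons_val', cons_val_zero, cons_val_one,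
        empty_val', cons_val_fin_one]
      omega
    · simp only [wordMatrix_cons_R, of_apply, cons_val', cons_val_zero, cons_val_one,
        empty_val', cons_val_fin_one]
      omega

end wordMatrix

theorem wordMatrix_cons_ne_one (x : LR) (w : List LR) : wordMatrix (x :: w) ≠ 1 := by
  have := wordMatrix_entry_bounds w
  intro h
  rw [one_fin_two] at h
  cases x
  · rw [wordMatrix_cons_L] at h
    simp only [EmbeddingLike.apply_eq_iff_eq, vecCons_inj, and_true] at h
    omega
  · rw [wordMatrix_cons_R] at h
    simp only [EmbeddingLike.apply_eq_iff_eq, vecCons_inj, and_true] at h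
    omega

theorem head_eq_of_wordMatrix_cons_eq {x x' : LR} {w w' : List LR}
    (h : wordMatrix (x :: w) = wordMatrix (x' :: w')) : x = x' := by
  have := wordMatrix_entry_bounds w
  have := wordMatrix_entry_bounds w'
  cases x <;> cases x'
  · rfl
  · rw [wordMatrix_cons_L, wordMatrix_cons_R] at h
    simp only [EmbeddingLike.apply_eq_iff_eq, vecCons_inj, and_true] at h
    omega
  · rw [wordMatrix_cons_R, wordMatrix_cons_L] at h
    simp only [EmbeddingLike.apply_eq_iff_eq, vecCons_inj, and_true] at h
    omega
  · rfl

theorem wordMatrix_injective : Function.Injective wordMatrix := by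
  intro w w' h
  induction w generalizing w' with
  | nil =>
    cases w' with
    | nil => rfl
    | cons x' w' => exact absurd h.symm (wordMatrix_cons_ne_one x' w')
  | cons x w ih =>
    cases w' with
    | nil => exact absurd h (wordMatrix_cons_ne_one x w)
    | cons x' w' =>
      obtain rfl := head_eq_of_wordMatrix_cons_eq h
      rw [ih (x.isUnit_toMatrix.mul_left_injective h)]

theorem wordMatrix_append (u v : List LR) : wordMatrix (u ++ v) = wordMatrix v * wordMatrix u := by
  induction u with
  | nil => simp [wordMatrix]
  | cons x u ih => simp [wordMatrix, ih, Matrix.mul_assoc]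

def flipMatrix : Matrix (Fin 2) (Fin 2) ℤ := !![0, 1; 1, 0]

theorem flipMatrix_mul_self : flipMatrix * flipMatrix = 1 := by
  decide

theorem flipMatrix_mul_flipMatrix_mul (A : Matrix (Fin 2) (Fin 2) ℤ) :
    flipMatrix * (flipMatrix * A) = A := by
  rw [← Matrix.mul_assoc, flipMatrix_mul_self, Matrix.one_mul]

theorem LR.flipMatrix_conj_transpose_toMatrix (x : LR) :
    flipMatrix * x.toMatrixᵀ * flipMatrix = x.toMatrix := by
  cases x <;> decide

theorem flipMatrix_mul_transpose_mul_flipMatrix (M : Matrix (Fin 2) (Fin 2) ℤ) :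
    flipMatrix * Mᵀ * flipMatrix = !![M 1 1, M 0 1; M 1 0, M 0 0] := by
  ext i j
  fin_cases i <;> fin_cases j <;> simp [flipMatrix, mul_apply, Fin.sum_univ_two, vecMul, dotProduct]

theorem flipMatrix_mul_mul_flipMatrix (M : Matrix (Fin 2) (Fin 2) ℤ) :
    flipMatrix * M * flipMatrix = !![M 1 1, M 1 0; M 0 1, M 0 0] := by
  ext i j
  fin_cases i <;> fin_cases j <;> simp [flipMatrix, mul_apply, Fin.sum_univ_two, vecMul, dotProduct]

theorem wordMatrix_reverse (w : List LR) :
    wordMatrix w.reverse = flipMatrix * (wordMatrix w)ᵀ * flipMatrix := by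
  induction w with
  | nil => simp [wordMatrix, flipMatrix_mul_self]
  | cons x w ih =>
    rw [List.reverse_cons, wordMatrix_append, ih]
    calc wordMatrix [x] * (flipMatrix * (wordMatrix w)ᵀ * flipMatrix)
        = flipMatrix * x.toMatrixᵀ * flipMatrix * (flipMatrix * (wordMatrix w)ᵀ * flipMatrix) := by
          simp [wordMatrix, x.flipMatrix_conj_transpose_toMatrix]
      _ = flipMatrix * (wordMatrix w * x.toMatrix)ᵀ * flipMatrix := by
          simp only [transpose_mul, Matrix.mul_assoc, flipMatrix_mul_flipMatrix_mul]

theorem wordMatrix_iop (w : List LR) :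
    wordMatrix (iop w) = flipMatrix * wordMatrix w * flipMatrix := by
  induction w with
  | nil => simp [iop, wordMatrix, flipMatrix_mul_self]
  | cons x w ih =>
    have hconj : wordMatrix (iop [x]) = flipMatrix * x.toMatrix * flipMatrix := by
      cases x <;> decide
    calc wordMatrix (iop (x :: w)) = wordMatrix (iop w) * wordMatrix (iop [x]) := by
          rw [← wordMatrix_append]; rfl
      _ = flipMatrix * (wordMatrix w * x.toMatrix) * flipMatrix := by
          simp only [ih, hconj, Matrix.mul_assoc, flipMatrix_mul_flipMatrix_mul]

theorem farey_left_neighbor_unique {p q p' q' r s : ℤ} (h : q * r - p * s = 1)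
    (h' : q' * r - p' * s = 1) (hq : 0 < q) (hqs : q ≤ s) (hq' : 0 < q') (hq's : q' ≤ s) :
    p = p' ∧ q = q' := by
  have hcop : IsCoprime s r := ⟨-p, q, by linear_combination h⟩
  have hdvd : s ∣ q - q' := hcop.dvd_of_dvd_mul_right ⟨p - p', by linear_combination h - h'⟩
  obtain rfl : q = q' := by
    have := Int.eq_zero_of_abs_lt_dvd hdvd (abs_sub_lt_iff.2 ⟨by omega, by omega⟩)
    omega
  have : s * (p - p') = 0 := by linear_combination h' - h
  rcases mul_eq_zero.1 this with h0 | h0 <;> omega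

section value

variable (w : List LR)

def wordValue : ℚ :=
  ((wordMatrix w 1 0 + wordMatrix w 1 1 : ℤ) : ℚ) /
    (wordMatrix w 0 0 + wordMatrix w 0 1 + wordMatrix w 1 0 + wordMatrix w 1 1 : ℤ)

def leftParent : ℚ := (wordMatrix w 1 0 : ℚ) / (wordMatrix w 0 0 + wordMatrix w 1 0 : ℤ)

def rightParent : ℚ := (wordMatrix w 1 1 : ℚ) / (wordMatrix w 0 1 + wordMatrix w 1 1 : ℤ)

theorem fareyPair_leftParent_rightParent : FareyPair (leftParent w) (rightParent w) (wordValue w) := by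
  have := wordMatrix_entry_bounds w
  refine ⟨wordMatrix w 1 0, wordMatrix w 0 0 + wordMatrix w 1 0, wordMatrix w 1 1,
    wordMatrix w 0 1 + wordMatrix w 1 1, by omega, by omega,
    by linear_combination wordMatrix_det w, rfl, rfl, ?_⟩
  rw [wordValue]
  push_cast
  ring

theorem leftParent_cons_L : leftParent (.L :: w) = leftParent w := by
  simp [leftParent, wordMatrix_cons_L]

theorem rightParent_cons_L : rightParent (.L :: w) = wordValue w := by
  rw [rightParent, wordValue, wordMatrix_cons_L]
  simp only [of_apply, cons_val', cons_val_zero, cons_val_one, empty_val', cons_val_fin_one]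
  push_cast
  ring

theorem leftParent_cons_R : leftParent (.R :: w) = wordValue w := by
  rw [leftParent, wordValue, wordMatrix_cons_R]
  simp only [of_apply, cons_val', cons_val_zero, cons_val_one, empty_val', cons_val_fin_one]
  push_cast
  ring

theorem rightParent_cons_R : rightParent (.R :: w) = rightParent w := by
  simp [rightParent, wordMatrix_cons_R]

theorem wordValue_pos : 0 < wordValue w := by
  have := wordMatrix_entry_bounds w
  exact div_pos (by exact_mod_cast (by omega)) (by exact_mod_cast (by omega))

theorem wordValue_lt_one : wordValue w < 1 := by
  have := wordMatrix_entry_bounds w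
  rw [wordValue, div_lt_one (by exact_mod_cast (by omega))]
  exact_mod_cast (by omega)

end value

theorem num_den_eq_of_div_eq_wordValue {w : List LR} {r s : ℤ} (hrs : IsCoprime r s) (hs : 0 < s)
    (h : (r : ℚ) / s = wordValue w) :
    r = wordMatrix w 1 0 + wordMatrix w 1 1 ∧
      s = wordMatrix w 0 0 + wordMatrix w 0 1 + wordMatrix w 1 0 + wordMatrix w 1 1 := by
  have := wordMatrix_entry_bounds w
  have hcop : IsCoprime (wordMatrix w 1 0 + wordMatrix w 1 1)
      (wordMatrix w 0 0 + wordMatrix w 0 1 + wordMatrix w 1 0 + wordMatrix w 1 1) :=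
    ⟨wordMatrix w 0 0 + wordMatrix w 1 0, -wordMatrix w 1 0, by linear_combination wordMatrix_det w⟩
  exact Rat.div_int_inj hs (by omega) (Int.isCoprime_iff_gcd_eq_one.1 hrs)
    (Int.isCoprime_iff_gcd_eq_one.1 hcop) h

theorem eq_parents_of_mediant_eq_wordValue {w : List LR} {p q r s : ℤ} (h : q * r - p * s = 1)
    (hq : 0 < q) (hs : 0 < s) (hx : ((p : ℚ) + r) / ((q : ℚ) + s) = wordValue w) :
    p = wordMatrix w 1 0 ∧ q = wordMatrix w 0 0 + wordMatrix w 1 0 ∧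
      r = wordMatrix w 1 1 ∧ s = wordMatrix w 0 1 + wordMatrix w 1 1 := by
  have := wordMatrix_entry_bounds w
  obtain ⟨hnum, hden⟩ := num_den_eq_of_div_eq_wordValue (r := p + r) (s := q + s)
    ⟨q, -p, by linear_combination h⟩ (by omega) (by push_cast; exact hx)
  obtain ⟨rfl, rfl⟩ := farey_left_neighbor_unique (p := p) (q := q) (r := p + r) (s := q + s)
    (p' := wordMatrix w 1 0) (q' := wordMatrix w 0 0 + wordMatrix w 1 0)
    (by linear_combination h) (by rw [hnum, hden]; linear_combination wordMatrix_det w)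
    hq (by omega) (by omega) (by omega)
  omega

theorem wordValue_injective : Function.Injective wordValue := by
  intro w w' h
  have := wordMatrix_entry_bounds w
  obtain ⟨h10, h00, h11, h01⟩ := eq_parents_of_mediant_eq_wordValue (w := w')
    (p := wordMatrix w 1 0) (q := wordMatrix w 0 0 + wordMatrix w 1 0) (r := wordMatrix w 1 1)
    (s := wordMatrix w 0 1 + wordMatrix w 1 1) (by linear_combination wordMatrix_det w)
    (by omega) (by omega) (by rw [← h, wordValue]; push_cast; ring)
  apply wordMatrix_injective
  rw [eta_fin_two (wordMatrix w), eta_fin_two (wordMatrix w')]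
  simp only [EmbeddingLike.apply_eq_iff_eq, vecCons_inj, and_true]
  omega

theorem leftParent_eq_zero_or (w : List LR) :
    leftParent w = 0 ∨ ∃ w', w'.length < w.length ∧ leftParent w = wordValue w' := by
  induction w with
  | nil => simp [leftParent, wordMatrix]
  | cons x w ih =>
    cases x
    · rw [leftParent_cons_L]
      rcases ih with h | ⟨w', hlt, h⟩
      · exact .inl h
      · exact .inr ⟨w', Nat.lt_succ_of_lt hlt, h⟩
    · exact .inr ⟨w, Nat.lt_succ_self _, leftParent_cons_R w⟩

theorem rightParent_eq_one_or (w : List LR) :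
    rightParent w = 1 ∨ ∃ w', w'.length < w.length ∧ rightParent w = wordValue w' := by
  induction w with
  | nil => simp [rightParent, wordMatrix]
  | cons x w ih =>
    cases x
    · exact .inr ⟨w, Nat.lt_succ_self _, rightParent_cons_L w⟩
    · rw [rightParent_cons_R]
      rcases ih with h | ⟨w', hlt, h⟩
      · exact .inl h
      · exact .inr ⟨w', Nat.lt_succ_of_lt hlt, h⟩

theorem length_lt_of_wordValue_eq_leftParent {v w : List LR} (h : wordValue v = leftParent w) :
    v.length < w.length := by
  rcases leftParent_eq_zero_or w with h0 | ⟨w', hlt, hw'⟩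
  · exact absurd (h.trans h0) (wordValue_pos v).ne'
  · rwa [wordValue_injective (h.trans hw')]

theorem length_lt_of_wordValue_eq_rightParent {v w : List LR} (h : wordValue v = rightParent w) :
    v.length < w.length := by
  rcases rightParent_eq_one_or w with h1 | ⟨w', hlt, hw'⟩
  · exact absurd (h.trans h1) (wordValue_lt_one v).ne
  · rwa [wordValue_injective (h.trans hw')]

theorem sb_wordValue : (w : List LR) → SB (wordValue w) w
  | [] => by
    convert SB.half
    norm_num [wordValue, wordMatrix]
  | .L :: w => by
    have hf : FareyPair (leftParent w) (wordValue w) (wordValue (.L :: w)) := by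
      rw [← leftParent_cons_L, ← rightParent_cons_L]
      exact fareyPair_leftParent_rightParent _
    rcases leftParent_eq_zero_or w with h0 | ⟨w', hlt, hw'⟩
    · exact .lbase _ _ w (h0 ▸ hf) (sb_wordValue w)
    · exact .left _ _ _ w' w (hw' ▸ hf) (sb_wordValue w') (sb_wordValue w) hlt
  | .R :: w => by
    have hf : FareyPair (wordValue w) (rightParent w) (wordValue (.R :: w)) := by
      rw [← leftParent_cons_R, ← rightParent_cons_R]
      exact fareyPair_leftParent_rightParent _
    rcases rightParent_eq_one_or w with h1 | ⟨w', hlt, hw'⟩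
    · exact .rbase _ _ w (h1 ▸ hf) (sb_wordValue w)
    · exact .right _ _ _ w w' (hw' ▸ hf) (sb_wordValue w) (sb_wordValue w') hlt
termination_by w => w.length

theorem farey_neighbor_eq_leftParent {w : List LR} {p q r s : ℤ} (h : q * r - p * s = 1)
    (hq : 0 < q) (hqs : q ≤ s) (hz : (r : ℚ) / s = wordValue w) :
    (p : ℚ) / q = leftParent w ∧ ((p : ℚ) + r) / ((q : ℚ) + s) = wordValue (.L :: w) := by
  have := wordMatrix_entry_bounds w
  obtain ⟨rfl, rfl⟩ := num_den_eq_of_div_eq_wordValue ⟨q, -p, by linear_combination h⟩ (by omega) hz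
  obtain ⟨rfl, rfl⟩ := farey_left_neighbor_unique (p' := wordMatrix w 1 0)
    (q' := wordMatrix w 0 0 + wordMatrix w 1 0) h (by linear_combination wordMatrix_det w)
    hq hqs (by omega) (by omega)
  refine ⟨rfl, ?_⟩
  rw [wordValue, wordMatrix_cons_L]
  simp only [of_apply, cons_val', cons_val_zero, cons_val_one, empty_val', cons_val_fin_one]
  push_cast
  ring

theorem farey_neighbor_eq_rightParent {w : List LR} {p q r s : ℤ} (h : q * r - p * s = 1)
    (hs : 0 < s) (hsq : s ≤ q) (hy : (p : ℚ) / q = wordValue w) :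
    (r : ℚ) / s = rightParent w ∧ ((p : ℚ) + r) / ((q : ℚ) + s) = wordValue (.R :: w) := by
  have := wordMatrix_entry_bounds w
  obtain ⟨hp, hq⟩ := num_den_eq_of_div_eq_wordValue ⟨-s, r, by linear_combination h⟩ (by omega) hy
  obtain ⟨hr, rfl⟩ := farey_left_neighbor_unique (p := -r) (q := s) (r := -p) (s := q)
    (p' := -wordMatrix w 1 1) (q' := wordMatrix w 0 1 + wordMatrix w 1 1)
    (by linear_combination h) (by rw [hp, hq]; linear_combination wordMatrix_det w)
    hs hsq (by omega) (by omega)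
  obtain rfl : r = wordMatrix w 1 1 := neg_inj.1 hr
  subst hp hq
  refine ⟨rfl, ?_⟩
  rw [wordValue, wordMatrix_cons_R]
  simp only [of_apply, cons_val', cons_val_zero, cons_val_one, empty_val', cons_val_fin_one]
  push_cast
  ring

theorem SB.eq_wordValue {x : ℚ} {w : List LR} (hw : SB x w) : x = wordValue w := by
  induction hw with
  | half => norm_num [wordValue, wordMatrix]
  | left y z x w₁ w₂ hf _ _ hlen ih₁ ih₂ =>
    obtain ⟨p, q, r, s, hq, hs, h, rfl, rfl, rfl⟩ := hf
    rcases le_or_gt q s with hqs | hsq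
    · exact (farey_neighbor_eq_leftParent h hq hqs ih₂).2
    · have hz := (farey_neighbor_eq_rightParent h hs hsq.le ih₁).1
      exact absurd hlen (length_lt_of_wordValue_eq_rightParent (ih₂.symm.trans hz)).not_gt
  | right y z x w₁ w₂ hf _ _ hlen ih₁ ih₂ =>
    obtain ⟨p, q, r, s, hq, hs, h, rfl, rfl, rfl⟩ := hf
    rcases le_or_gt s q with hsq | hqs
    · exact (farey_neighbor_eq_rightParent h hs hsq ih₁).2
    · have hy := (farey_neighbor_eq_leftParent h hq hqs.le ih₂).1
      exact absurd hlen (length_lt_of_wordValue_eq_leftParent (ih₁.symm.trans hy)).not_gt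
  | lbase z x w₂ hf _ ih₂ =>
    obtain ⟨p, q, r, s, hq, hs, h, hy, rfl, rfl⟩ := hf
    have hp : p = 0 := by
      simpa [hq.ne'] using hy.symm
    have hq1 : q ≤ 1 := Int.le_of_dvd one_pos ⟨r, by linear_combination -h - s * hp⟩
    exact (farey_neighbor_eq_leftParent h hq (by omega) ih₂).2
  | rbase y x w₁ hf _ ih₁ =>
    obtain ⟨p, q, r, s, hq, hs, h, rfl, hz, rfl⟩ := hf
    have hr : r = s := by
      rw [eq_div_iff (by positivity), one_mul] at hz
      exact_mod_cast hz.symm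
    have hs1 : s ≤ 1 := Int.le_of_dvd one_pos ⟨q - p, by linear_combination -h + q * hr⟩
    exact (farey_neighbor_eq_rightParent h hs (by omega) ih₁).2

theorem wordValue_reverse (w : List LR) :
    wordValue w.reverse = ((wordMatrix w 0 0 + wordMatrix w 1 0 : ℤ) : ℚ) /
      ((wordMatrix w 0 0 + wordMatrix w 1 0 : ℤ) + (wordMatrix w 0 1 + wordMatrix w 1 1 : ℤ)) := by
  rw [wordValue, wordMatrix_reverse, flipMatrix_mul_transpose_mul_flipMatrix]
  simp only [of_apply, cons_val', cons_val_zero, cons_val_one, empty_val', cons_val_fin_one]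
  push_cast
  ring

theorem wordValue_iop_reverse (w : List LR) :
    wordValue (iop w.reverse) = ((wordMatrix w 0 1 + wordMatrix w 1 1 : ℤ) : ℚ) /
      ((wordMatrix w 0 0 + wordMatrix w 1 0 : ℤ) + (wordMatrix w 0 1 + wordMatrix w 1 1 : ℤ)) := by
  rw [wordValue, wordMatrix_iop, wordMatrix_reverse, flipMatrix_mul_transpose_mul_flipMatrix,
    flipMatrix_mul_mul_flipMatrix]
  simp only [of_apply, cons_val', cons_val_zero, cons_val_one, empty_val', cons_val_fin_one]
  push_cast
  ring

/-- Let α = (p+r)/(q+s) ∈ ℚ ∩ (0,1) have the pair of parents (p/q, r/s)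
(so q*r - p*s = 1) and LR word w.  Then the reversed word r(w) is the LR word of
q/(q+s), and (i∘r)(w) is the LR word of s/(q+s). -/
theorem SB_reverse_and_ir (p q r s : ℤ) (hq : 0 < q) (hs : 0 < s)
    (h : q * r - p * s = 1) (w : List LR)
    (hw : SB (((p : ℚ) + r) / ((q : ℚ) + s)) w) :
    SB ((q : ℚ) / ((q : ℚ) + s)) w.reverse ∧
      SB ((s : ℚ) / ((q : ℚ) + s)) (iop w.reverse) := by
  obtain ⟨rfl, rfl, rfl, rfl⟩ := eq_parents_of_mediant_eq_wordValue h hq hs hw.eq_wordValue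
  exact ⟨wordValue_reverse w ▸ sb_wordValue w.reverse, wordValue_iop_reverse w ▸ sb_wordValue _⟩
end

section
/- For an LR word w and any rationals: if i(w) corresponds to the continued fraction [0; a₂, …, a_m] (m even), then the word wR corresponds to [0; 1, a₂, …, a_m], the word wL corresponds to [0; 2, a₂-1, a₃, …, a_m], and w itself corresponds to [0; 1, a₂-1, a₃, …, a_m]. -/
/-- Continued fraction evaluation: `cf [a, b, c, …] = a + 1/(b + 1/(c + ⋯))`
(with the ℚ convention 1/0 = 0 at the tail), so that `1 / cf l` is the continued
fraction [0; l]. -/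
def cf : List ℕ → ℚ
  | [] => 0
  | a :: l => (a : ℚ) + 1 / cf l

/-! The maps `x ↦ 1 - x`, `x ↦ x / (x + 1)` and `x ↦ 1 / (2 - x)` are Möbius maps carrying
Farey neighbours to Farey neighbours, so by induction on the tree they realise `i` and the
appending of `L` and `R` to a word. With `u = [a₂; a₃, …, a_m] > 1`, the word `w` is therefore
the word of `1 - 1/u`, and the three claims reduce to the identities
`1 - 1/u = [0; 1, u - 1]`, `1 / (2 - (1 - 1/u)) = [0; 1, u]` and
`(1 - 1/u) / (2 - 1/u) = [0; 2, u - 1]`, where `u - 1 = [a₂ - 1; a₃, …, a_m]`. -/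

theorem iop_iop (w : List LR) : iop (iop w) = w := by
  induction w with
  | nil => rfl
  | cons a w ih => cases a <;> simp_all [iop]

theorem length_iop (w : List LR) : (iop w).length = w.length := List.length_map _

theorem iop_append (u v : List LR) : iop (u ++ v) = iop u ++ iop v := List.map_append

namespace FareyPair

variable {y z x : ℚ}

theorem mem_Ioo (h : FareyPair y z x) : x ∈ Set.Ioo y z := by
  obtain ⟨p, q, r, s, hq, hs, hdet, rfl, rfl, rfl⟩ := h
  have hq' : (0 : ℚ) < q := by exact_mod_cast hq
  have hs' : (0 : ℚ) < s := by exact_mod_cast hs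
  have hdet' : (q : ℚ) * r - p * s = 1 := by exact_mod_cast hdet
  constructor
  · rw [div_lt_div_iff₀ hq' (by positivity)]; linarith
  · rw [div_lt_div_iff₀ (by positivity) hs']; linarith

theorem one_sub (h : FareyPair y z x) : FareyPair (1 - z) (1 - y) (1 - x) := by
  obtain ⟨p, q, r, s, hq, hs, hdet, rfl, rfl, rfl⟩ := h
  have hq' : (0 : ℚ) < q := by exact_mod_cast hq
  have hs' : (0 : ℚ) < s := by exact_mod_cast hs
  refine ⟨s - r, s, q - p, q, hs, hq, by linarith, ?_, ?_, ?_⟩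
  · push_cast; field_simp
  · push_cast; field_simp
  · push_cast; field_simp; ring

theorem map (h : FareyPair y z x) (a b c d : ℤ) (hdet : a * d - b * c = 1)
    (hy : 0 < c * y + d) (hz : 0 < c * z + d) :
    FareyPair ((a * y + b) / (c * y + d)) ((a * z + b) / (c * z + d))
      ((a * x + b) / (c * x + d)) := by
  obtain ⟨p, q, r, s, hq, hs, hpqrs, rfl, rfl, rfl⟩ := h
  have hq' : (0 : ℚ) < q := by exact_mod_cast hq
  have hs' : (0 : ℚ) < s := by exact_mod_cast hs
  have hcpdq : (0 : ℚ) < c * p + d * q := by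
    rw [show (c * p + d * q : ℚ) = q * (c * (p / q) + d) by field_simp]
    positivity
  have hcrds : (0 : ℚ) < c * r + d * s := by
    rw [show (c * r + d * s : ℚ) = s * (c * (r / s) + d) by field_simp]
    positivity
  refine ⟨a * p + b * q, c * p + d * q, a * r + b * s, c * r + d * s,
    by exact_mod_cast hcpdq, by exact_mod_cast hcrds,
    by linear_combination (a * d - b * c) * hpqrs + hdet, ?_, ?_, ?_⟩
  · push_cast; field_simp
  · push_cast; field_simp
  · push_cast; field_simp; ring

end FareyPair

namespace SB

variable {x : ℚ} {w : List LR}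

theorem mem_Ioo (h : SB x w) : x ∈ Set.Ioo 0 1 := by
  induction h with
  | half => norm_num
  | left _ _ _ _ _ hf _ _ _ hy hz | right _ _ _ _ _ hf _ _ _ hy hz =>
    exact ⟨hy.1.trans hf.mem_Ioo.1, hf.mem_Ioo.2.trans hz.2⟩
  | lbase _ _ _ hf _ hz => exact ⟨hf.mem_Ioo.1, hf.mem_Ioo.2.trans hz.2⟩
  | rbase _ _ _ hf _ hy => exact ⟨hy.1.trans hf.mem_Ioo.1, hf.mem_Ioo.2⟩

theorem one_sub_iop (h : SB x w) : SB (1 - x) (iop w) := by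
  induction h with
  | half =>
    rw [show (1 : ℚ) - 1 / 2 = 1 / 2 by norm_num]
    exact half
  | left _ _ _ w₁ w₂ hf _ _ hlen hy hz =>
    exact right _ _ _ (iop w₂) (iop w₁) hf.one_sub hz hy (by simpa only [length_iop] using hlen)
  | right _ _ _ w₁ w₂ hf _ _ hlen hy hz =>
    exact left _ _ _ (iop w₂) (iop w₁) hf.one_sub hz hy (by simpa only [length_iop] using hlen)
  | lbase _ _ _ hf _ hz => exact rbase _ _ _ (by simpa using hf.one_sub) hz
  | rbase _ _ _ hf _ hy => exact lbase _ _ _ (by simpa using hf.one_sub) hy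

theorem append_L (h : SB x w) : SB (x / (x + 1)) (w ++ [LR.L]) := by
  have hmap {y z x : ℚ} (hf : FareyPair y z x) (hy : 0 ≤ y) (hz : 0 ≤ z) :
      FareyPair (y / (y + 1)) (z / (z + 1)) (x / (x + 1)) := by
    simpa using hf.map 1 0 1 1 (by norm_num) (by simp; linarith) (by simp; linarith)
  induction h with
  | half =>
    rw [show (1 : ℚ) / 2 / (1 / 2 + 1) = 1 / 3 by norm_num]
    exact lbase (1 / 2) _ [] ⟨0, 1, 1, 2, by norm_num, by norm_num, by norm_num, by norm_num,
      by norm_num, by norm_num⟩ half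
  | left _ _ _ _ _ hf hy hz hlen ihy ihz =>
    exact left _ _ _ _ _ (hmap hf hy.mem_Ioo.1.le hz.mem_Ioo.1.le) ihy ihz (by simpa using hlen)
  | right _ _ _ _ _ hf hy hz hlen ihy ihz =>
    exact right _ _ _ _ _ (hmap hf hy.mem_Ioo.1.le hz.mem_Ioo.1.le) ihy ihz (by simpa using hlen)
  | lbase _ _ _ hf hz ihz =>
    exact lbase _ _ _ (by simpa using hmap hf le_rfl hz.mem_Ioo.1.le) ihz
  | rbase _ _ _ hf hy ihy =>
    -- the endpoint `1` is sent to the root `1/2`, so the base case becomes an inner one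
    have hf' := hmap hf hy.mem_Ioo.1.le zero_le_one
    norm_num at hf'
    exact right _ _ _ _ [] hf' ihy half (by simp)

/-- Conjugate of `append_L` by `x ↦ 1 - x`: `1 - (1 - x) / (2 - x) = 1 / (2 - x)`. -/
theorem append_R (h : SB x w) : SB (1 / (2 - x)) (w ++ [LR.R]) := by
  have hx : (2 : ℚ) - x ≠ 0 := by linarith [h.mem_Ioo.2]
  convert h.one_sub_iop.append_L.one_sub_iop using 1
  · rw [show (1 : ℚ) - x + 1 = 2 - x by ring]
    field_simp
    ring
  · rw [iop_append, iop_iop]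
    rfl

end SB

theorem cf_cons_sub_one {a : ℕ} (ha : 1 ≤ a) (l : List ℕ) :
    cf ((a - 1) :: l) = cf (a :: l) - 1 := by
  simp only [cf, Nat.cast_sub ha, Nat.cast_one]
  ring

theorem SB_append_contFrac_general (a₂ : ℕ) (rest : List ℕ)
    (hpos : ∀ a ∈ a₂ :: rest, 0 < a)
    (w : List LR) (hw : SB (1 / cf (a₂ :: rest)) (iop w)) :
    SB (1 / cf (1 :: a₂ :: rest)) (w ++ [LR.R]) ∧
      SB (1 / cf (2 :: (a₂ - 1) :: rest)) (w ++ [LR.L]) ∧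
      SB (1 / cf (1 :: (a₂ - 1) :: rest)) w := by
  have hpred := cf_cons_sub_one (hpos a₂ List.mem_cons_self) rest
  set u := cf (a₂ :: rest) with hu_def
  have hu : 1 < u := by
    obtain ⟨hinv_pos, hinv_lt⟩ := hw.mem_Ioo
    simpa using one_lt_one_div hinv_pos hinv_lt
  have hw' : SB (1 - 1 / u) w := iop_iop w ▸ hw.one_sub_iop
  have hu₀ : 0 < u := zero_lt_one.trans hu
  have hu₁ : 0 < u - 1 := sub_pos.2 hu
  refine ⟨?_, ?_, ?_⟩
  · convert hw'.append_R using 2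
    rw [cf, ← hu_def]
    push_cast
    ring
  · convert hw'.append_L using 1
    rw [cf, hpred]
    push_cast
    field_simp
    ring
  · convert hw' using 1
    rw [cf, hpred]
    push_cast
    field_simp
    ring

/-- If i(w) corresponds to the continued fraction [0; a₂, …, a_m] (m even, i.e. the
list of partial quotients has odd length), then wR corresponds to [0; 1, a₂, …, a_m],
wL corresponds to [0; 2, a₂ - 1, a₃, …, a_m], and w itself corresponds to
[0; 1, a₂ - 1, a₃, …, a_m]. -/
theorem SB_append_contFrac (a₂ : ℕ) (rest : List ℕ)
    (hpos : ∀ a ∈ a₂ :: rest, 0 < a) (hodd : Odd (a₂ :: rest).length)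
    (w : List LR) (hw : SB (1 / cf (a₂ :: rest)) (iop w)) :
    SB (1 / cf (1 :: a₂ :: rest)) (w ++ [LR.R]) ∧
      SB (1 / cf (2 :: (a₂ - 1) :: rest)) (w ++ [LR.L]) ∧
      SB (1 / cf (1 :: (a₂ - 1) :: rest)) w :=
  SB_append_contFrac_general a₂ rest hpos w hw
end

section
/- Define v(φ(·)) ∈ ℤ[A, A⁻¹] on ℚ₊ ∪ {∞} by v(φ(0)) = 1, v(φ(∞)) = A⁶·(-A²-A⁻²), and v(φ(x)) = -A⁴·v(φ(y)) - A⁻⁴·v(φ(z)) for x the mediant of its parents (y, z). Then for every irreducible fraction p/q with 1 ≤ p ≤ q, the involution A ↦ A⁻¹ applied to v(φ(p/q)) yields v(φ((q-p)/q)), i.e., conjugate of v(φ(p/q)) equals v(φ((q-p)/q)). -/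
/-!
The reflection `x ↦ 1 - x` of the Stern–Brocot tree sends the parents `(a/b, c/d)` of `p/q` to the
parents `((d-c)/d, (b-a)/b)` of `(q-p)/q`, i.e. it swaps the two parents, while `A ↦ A⁻¹` swaps the
weights `-A⁴` and `-A⁻⁴` of the recursion. Hence the claim follows by strong induction on the
denominator, starting from `v(φ(0)) = v(φ(1)) = 1`.
-/

open LaurentPolynomial

/-- The fraction p/q viewed in ℚ₊ ∪ {∞}, with p/0 = ∞. -/
def toW (p q : ℕ) : WithTop ℚ≥0 := if q = 0 then ⊤ else (((p : ℚ≥0) / q : ℚ≥0) : WithTop ℚ≥0)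

/-- `IsParents y z x` : (y, z) are Farey neighbors (q*r - p*s = 1, with 1/0 = ∞ allowed)
whose mediant is x. -/
def IsParents (y z x : WithTop ℚ≥0) : Prop :=
  ∃ p q r s : ℕ, q * r = p * s + 1 ∧ y = toW p q ∧ z = toW r s ∧ x = toW (p + r) (q + s)

lemma toW_zero_one : toW 0 1 = 0 := by simp [toW]

lemma toW_one_zero : toW 1 0 = ⊤ := by simp [toW]

lemma isParents_toW {p q r s : ℕ} (h : q * r = p * s + 1) :
    IsParents (toW p q) (toW r s) (toW (p + r) (q + s)) :=
  ⟨p, q, r, s, h, rfl, rfl, rfl⟩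

lemma Nat.coprime_of_mul_eq_mul_add_one {a b c d : ℕ} (h : b * c = a * d + 1) :
    a.Coprime b ∧ c.Coprime d := by
  have h' : (b : ℤ) * c = a * d + 1 := by exact_mod_cast h
  exact ⟨Nat.isCoprime_iff_coprime.mp ⟨-d, c, by linear_combination h'⟩,
    Nat.isCoprime_iff_coprime.mp ⟨b, -a, by linear_combination h'⟩⟩

lemma exists_farey_parents_s15 {p q : ℕ} (hcop : p.Coprime q) (hq : 1 < q) (hpq : p ≤ q) :
    ∃ a b c d, b * c = a * d + 1 ∧ a + c = p ∧ b + d = q ∧ a ≤ b ∧ c ≤ d := by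
  have hlt : p < q := by
    refine hpq.lt_of_ne ?_
    rintro rfl
    rw [Nat.coprime_self] at hcop
    omega
  obtain ⟨b, hbq, hb⟩ := Nat.exists_mul_mod_eq_one_of_coprime hcop hq
  have hpb : p * b = p * b / q * q + 1 := by rw [← hb, Nat.mul_comm _ q, Nat.div_add_mod]
  generalize p * b / q = a at hpb
  obtain ⟨d, rfl⟩ : ∃ d, q = b + d := ⟨q - b, by omega⟩
  have hab : a < b := by nlinarith
  have hap : a < p := by nlinarith
  obtain ⟨c, rfl⟩ : ∃ c, p = a + c := ⟨p - a, by omega⟩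
  have hunimod : b * c = a * d + 1 := by linarith
  refine ⟨a, b, c, d, hunimod, rfl, rfl, hab.le, ?_⟩
  nlinarith

section

variable {vφ : WithTop ℚ≥0 → LaurentPolynomial ℤ}
  (hrec : ∀ x y z, IsParents y z x → vφ x = -T 4 * vφ y - T (-4) * vφ z)
include hrec

lemma vφ_toW_one_one (h0 : vφ 0 = 1) (hinf : vφ ⊤ = T 6 * (-T 2 - T (-2))) :
    vφ (toW 1 1) = 1 := by
  rw [hrec _ _ _ (isParents_toW (p := 0) (q := 1) (r := 1) (s := 0) rfl), toW_zero_one,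
    toW_one_zero, h0, hinf]
  simp only [mul_sub, mul_neg, mul_one, ← T_add]
  norm_num

lemma invert_vφ_toW_mediant {a b c d : ℕ} (h : b * c = a * d + 1) (hab : a ≤ b) (hcd : c ≤ d)
    (hleft : invert (vφ (toW a b)) = vφ (toW (b - a) b))
    (hright : invert (vφ (toW c d)) = vφ (toW (d - c) d)) :
    invert (vφ (toW (a + c) (b + d))) = vφ (toW (b + d - (a + c)) (b + d)) := by
  have hrefl : d * (b - a) = (d - c) * b + 1 := by
    zify [hab, hcd] at h ⊢
    linear_combination h
  have hsum : toW (b + d - (a + c)) (b + d) = toW (d - c + (b - a)) (d + b) := by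
    congr 1 <;> omega
  rw [hrec _ _ _ (isParents_toW h), hsum, hrec _ _ _ (isParents_toW hrefl)]
  simp only [map_sub, map_neg, map_mul, invert_T, neg_neg, hleft, hright]
  ring

theorem invert_vφ_toW (h0 : vφ 0 = 1) (hinf : vφ ⊤ = T 6 * (-T 2 - T (-2))) {p q : ℕ}
    (hpq : p ≤ q) (hcop : p.Coprime q) : invert (vφ (toW p q)) = vφ (toW (q - p) q) := by
  induction q using Nat.strong_induction_on generalizing p with
  | _ q ih =>
    rcases Nat.lt_or_ge 1 q with hq | hq
    · obtain ⟨a, b, c, d, h, rfl, rfl, hab, hcd⟩ := exists_farey_parents_s15 hcop hq hpq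
      obtain ⟨hcop_ab, hcop_cd⟩ := Nat.coprime_of_mul_eq_mul_add_one h
      have hb : 0 < b := by nlinarith
      have hd : 0 < d := by nlinarith
      exact invert_vφ_toW_mediant hrec h hab hcd (ih b (by omega) hab hcop_ab)
        (ih d (by omega) hcd hcop_cd)
    · have h11 := vφ_toW_one_one hrec h0 hinf
      interval_cases q
      · simp_all
      · interval_cases p <;> simp [toW_zero_one, h0, h11]

end

theorem invert_v_phi_general (vφ : WithTop ℚ≥0 → LaurentPolynomial ℤ)
    (h0 : vφ 0 = 1) (hinf : vφ ⊤ = T 6 * (-T 2 - T (-2)))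
    (hrec : ∀ x y z, IsParents y z x → vφ x = -T 4 * vφ y - T (-4) * vφ z)
    (p q : ℕ) (hpq : p ≤ q) (hcop : Nat.Coprime p q) :
    invert (vφ (toW p q)) = vφ (toW (q - p) q) :=
  invert_vφ_toW hrec h0 hinf hpq hcop

/-- Let v∘φ : ℚ₊ ∪ {∞} → ℤ[A,A⁻¹] satisfy v(φ(0)) = 1, v(φ(∞)) = A⁶·(-A² - A⁻²)
and v(φ(x)) = -A⁴·v(φ(y)) - A⁻⁴·v(φ(z)) for x the mediant of its parents (y,z).
Then for every irreducible fraction p/q with 1 ≤ p ≤ q, applying the involution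
A ↦ A⁻¹ (the algebra involution `invert` of ℤ[A,A⁻¹]) to v(φ(p/q)) gives
v(φ((q-p)/q)). -/
theorem invert_v_phi (vφ : WithTop ℚ≥0 → LaurentPolynomial ℤ)
    (h0 : vφ 0 = 1) (hinf : vφ ⊤ = T 6 * (-T 2 - T (-2)))
    (hrec : ∀ x y z, IsParents y z x → vφ x = -T 4 * vφ y - T (-4) * vφ z)
    (p q : ℕ) (hp : 1 ≤ p) (hpq : p ≤ q) (hcop : Nat.Coprime p q) :
    invert (vφ (toW p q)) = vφ (toW (q - p) q) :=
  invert_v_phi_general vφ h0 hinf hrec p q hpq hcop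
end

section
/- Let ⟨Γ(w)⟩ ∈ ℤ[A, A⁻¹] be defined on LR words by ⟨Γ(ε)⟩ = -A⁴ - A⁻⁴, ⟨Γ(L)⟩ = -A⁴ + 1 + A⁻⁸, ⟨Γ(R)⟩ = A⁸ + 1 - A⁻⁴, and ⟨Γ(w ∨ w')⟩ = -A⁴⟨Γ(w)⟩ - A⁻⁴⟨Γ(w')⟩ when the rationals of w, w' are Farey neighbors (∨ being the word of their Farey sum). Then writing |w|_L and |w|_R for the number of L's and R's in w: (1) the minimum degree of ⟨Γ(w)⟩ in A is -4(|w|_L + 1) and the maximum degree is 4(|w|_R + 1); (2) every nonzero coefficient of A^{4k} in ⟨Γ(w)⟩ has sign (-1)^k. -/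
open LaurentPolynomial

/-!
If `x` has Farey parents `y < z`, the recursion makes the coefficient of `T (4 * k)` in `g x` equal
to `-(g y)_(4k-4) - (g z)_(4k+4)`. When both parents have coefficients of sign `(-1) ^ k` at
`T (4 * k)`, the two terms have the same sign, so nothing cancels: signs keep alternating, the top
degree of `g x` is that of `g y` plus 4 and the bottom degree is that of `g z` minus 4, as long as
the shifted support of the other parent stays within these bounds.

On the word side, one parent of `x` is an ancestor of the other in the Stern–Brocot tree, namely the
one with the shorter word and smaller denominator. From the left parent one reaches `x` by one
`R`-step followed by `L`-steps, and symmetrically from the right parent, so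
`|w(x)|_R = |w(y)|_R + 1` and `|w(x)|_L = |w(z)|_L + 1`, which is exactly the degree bookkeeping
above. Transporting this through the relation `SB` needs that the word of a rational is unique.
-/

def FareyNeighbors (y z : ℚ) : Prop := (y.den : ℤ) * z.num - y.num * z.den = 1

lemma Rat.num_den_of_eq_div {p q : ℤ} {x : ℚ} (hq : 0 < q) (hpq : IsCoprime p q)
    (hx : x = p / q) : x.num = p ∧ (x.den : ℤ) = q := by
  have hcop : Nat.Coprime p.natAbs q.natAbs := Int.isCoprime_iff_gcd_eq_one.mp hpq
  subst hx
  exact ⟨Rat.num_div_eq_of_coprime hq hcop, by rw [Rat.den_div_eq_of_coprime hq hcop]⟩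

lemma Rat.two_le_den {x : ℚ} (h0 : 0 < x) (h1 : x < 1) : 2 ≤ x.den := by
  have := Rat.num_pos.mpr h0
  have := Rat.num_lt_denom_iff.mpr h1
  omega

namespace FareyNeighbors

variable {y z u v : ℚ}

lemma neg (h : FareyNeighbors y z) : FareyNeighbors (-z) (-y) := by
  unfold FareyNeighbors at *
  simp only [Rat.num_neg_eq_neg_num, Rat.den_neg_eq_den]
  linarith

lemma den_ne (h : FareyNeighbors y z) (hy : 2 ≤ y.den) : y.den ≠ z.den := by
  intro hd
  rw [FareyNeighbors, hd] at h
  have : (z.den : ℤ) ∣ 1 := ⟨z.num - y.num, by linear_combination -h⟩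
  have := Int.le_of_dvd one_pos this
  omega

lemma eq_of_left (h : FareyNeighbors y z) (h' : FareyNeighbors u z) (hy : y.den < z.den)
    (hu : u.den < z.den) : y = u := by
  unfold FareyNeighbors at h h'
  have key : ((y.den : ℤ) - u.den) * z.num = (y.num - u.num) * z.den := by linear_combination h - h'
  have hdvd : (z.den : ℤ) ∣ (y.den : ℤ) - u.den :=
    (Rat.isCoprime_num_den z).symm.dvd_of_dvd_mul_right ⟨y.num - u.num, by rw [key]; ring⟩
  have hden : y.den = u.den := by
    have := Int.eq_zero_of_abs_lt_dvd hdvd (by rw [abs_lt]; constructor <;> omega)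
    omega
  have hnum : y.num = u.num := by
    rw [hden, sub_self, zero_mul] at key
    have := z.den_pos
    rcases mul_eq_zero.mp key.symm with h | h <;> omega
  exact Rat.ext hnum hden

lemma eq_of_right (h : FareyNeighbors y z) (h' : FareyNeighbors y v) (hz : z.den < y.den)
    (hv : v.den < y.den) : z = v :=
  neg_injective (eq_of_left h.neg h'.neg (by simpa using hz) (by simpa using hv))

end FareyNeighbors

namespace FareyPair

variable {x y z u v y' z' : ℚ}

lemma num_den (h : FareyPair y z x) :
    FareyNeighbors y z ∧ x.num = y.num + z.num ∧ (x.den : ℤ) = y.den + z.den := by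
  obtain ⟨p, q, r, s, hq, hs, hdet, rfl, rfl, rfl⟩ := h
  obtain ⟨hyn, hyd⟩ := Rat.num_den_of_eq_div (p := p) hq ⟨-s, r, by linear_combination hdet⟩ rfl
  obtain ⟨hzn, hzd⟩ := Rat.num_den_of_eq_div (p := r) hs ⟨q, -p, by linear_combination hdet⟩ rfl
  obtain ⟨hxn, hxd⟩ := Rat.num_den_of_eq_div (p := p + r) (add_pos hq hs)
    ⟨-s, r, by linear_combination hdet⟩ (by push_cast; rfl)
  refine ⟨?_, by omega, by omega⟩
  rw [FareyNeighbors, hyn, hyd, hzn, hzd]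
  exact hdet

lemma neighbors_left (h : FareyPair y z x) : FareyNeighbors y x ∧ y.den < x.den := by
  obtain ⟨hyz, hn, hd⟩ := h.num_den
  have := z.den_pos
  refine ⟨?_, by omega⟩
  unfold FareyNeighbors at hyz ⊢
  rw [hn, hd]
  linear_combination hyz

lemma neighbors_right (h : FareyPair y z x) : FareyNeighbors x z ∧ z.den < x.den := by
  obtain ⟨hyz, hn, hd⟩ := h.num_den
  have := y.den_pos
  refine ⟨?_, by omega⟩
  unfold FareyNeighbors at hyz ⊢
  rw [hn, hd]
  linear_combination hyz

lemma lt (h : FareyPair y z x) : y < x ∧ x < z := by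
  obtain ⟨p, q, r, s, hq, hs, hdet, rfl, rfl, rfl⟩ := h
  have hq' : (0 : ℚ) < q := by exact_mod_cast hq
  have hs' : (0 : ℚ) < s := by exact_mod_cast hs
  have hdet' : (q : ℚ) * r - p * s = 1 := by exact_mod_cast hdet
  constructor
  · rw [div_lt_div_iff₀ hq' (by linarith)]
    nlinarith
  · rw [div_lt_div_iff₀ (by linarith) hs']
    nlinarith

lemma eq_left (h : FareyPair y z x) (hu : FareyNeighbors u x) (hud : u.den < x.den) : u = y :=
  hu.eq_of_left h.neighbors_left.1 hud h.neighbors_left.2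

lemma eq_right (h : FareyPair y z x) (hv : FareyNeighbors x v) (hvd : v.den < x.den) : v = z :=
  hv.eq_of_right h.neighbors_right.1 hvd h.neighbors_right.2

lemma unique (h : FareyPair y z x) (h' : FareyPair y' z' x) : y' = y ∧ z' = z :=
  ⟨h.eq_left h'.neighbors_left.1 h'.neighbors_left.2,
    h.eq_right h'.neighbors_right.1 h'.neighbors_right.2⟩

lemma half : FareyPair 0 1 (1 / 2) := ⟨0, 1, 1, 1, by norm_num⟩

end FareyPair

/-- Going down the Stern–Brocot tree from the left parent `u` of `x` to `x` is one `R`-step followed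
by `L`-steps only; the endpoint `0` plays the left parent of the words without `R`. -/
def LeftParentWord (u : ℚ) (w : List LR) : Prop :=
  (u = 0 ∧ w.count LR.R = 0) ∨
    ∃ wu, SB u wu ∧ wu.length < w.length ∧
      wu.count LR.R + 1 = w.count LR.R ∧ wu.count LR.L ≤ w.count LR.L

def RightParentWord (v : ℚ) (w : List LR) : Prop :=
  (v = 1 ∧ w.count LR.L = 0) ∨
    ∃ wv, SB v wv ∧ wv.length < w.length ∧
      wv.count LR.L + 1 = w.count LR.L ∧ wv.count LR.R ≤ w.count LR.R

def ParentWords (x : ℚ) (w : List LR) : Prop :=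
  (∀ u, FareyNeighbors u x → u.den < x.den → LeftParentWord u w) ∧
    (∀ v, FareyNeighbors x v → v.den < x.den → RightParentWord v w)

lemma ParentWords.of_fareyPair {x y z : ℚ} {w : List LR} (hp : FareyPair y z x)
    (hy : LeftParentWord y w) (hz : RightParentWord z w) : ParentWords x w :=
  ⟨fun _ hu hud => hp.eq_left hu hud ▸ hy, fun _ hv hvd => hp.eq_right hv hvd ▸ hz⟩

namespace SB

variable {x y z : ℚ} {w w' w₁ w₂ : List LR}

lemma pos (h : SB x w) : 0 < x ∧ x < 1 := by
  induction h with
  | half => norm_num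
  | left _ _ _ _ _ hp _ _ _ ih₁ ih₂ | right _ _ _ _ _ hp _ _ _ ih₁ ih₂ =>
    exact ⟨ih₁.1.trans hp.lt.1, hp.lt.2.trans ih₂.2⟩
  | lbase _ _ _ hp _ ih => exact ⟨hp.lt.1, hp.lt.2.trans ih.2⟩
  | rbase _ _ _ hp _ ih => exact ⟨ih.1.trans hp.lt.1, hp.lt.2⟩

lemma not_zero (w : List LR) : ¬ SB 0 w := fun h => h.pos.1.false
lemma not_one (w : List LR) : ¬ SB 1 w := fun h => h.pos.2.false

/-- Two derivations of the same rational have the same Farey parents; a parent `0` or `1` carries no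
word, and by induction the length test then selects the same constructor. -/
lemma unique (h : SB x w) (h' : SB x w') : w' = w := by
  induction h generalizing w' <;> cases h' <;>
    grind [FareyPair.unique, FareyPair.half, not_zero, not_one]

lemma den_lt_of_length_lt (hyz : FareyNeighbors y z) (hy : SB y w₁) (hz : SB z w₂)
    (hy' : ParentWords y w₁) (hlen : w₁.length < w₂.length) : y.den < z.den := by
  rcases lt_trichotomy y.den z.den with h | h | h
  · exact h
  · exact absurd h (hyz.den_ne (Rat.two_le_den hy.pos.1 hy.pos.2))
  · rcases hy'.2 z hyz h with ⟨rfl, -⟩ | ⟨wv, hwv, hlt, -⟩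
    · exact absurd hz (not_one w₂)
    · rw [hz.unique hwv] at hlt
      omega

lemma den_lt_of_length_gt (hyz : FareyNeighbors y z) (hy : SB y w₁)
    (hz' : ParentWords z w₂) (hlen : w₂.length < w₁.length) : z.den < y.den := by
  rcases lt_trichotomy y.den z.den with h | h | h
  · rcases hz'.1 y hyz h with ⟨rfl, -⟩ | ⟨wu, hwu, hlt, -⟩
    · exact absurd hy (not_zero w₁)
    · rw [hy.unique hwu] at hlt
      omega
  · exact absurd h (hyz.den_ne (Rat.two_le_den hy.pos.1 hy.pos.2))
  · exact h

lemma counts_of_den_lt (hyz : FareyNeighbors y z) (hy : SB y w₁) (hz' : ParentWords z w₂)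
    (h : y.den < z.den) :
    w₁.count LR.R + 1 = w₂.count LR.R ∧ w₁.count LR.L ≤ w₂.count LR.L := by
  rcases hz'.1 y hyz h with ⟨rfl, -⟩ | ⟨wu, hwu, -, hcount⟩
  · exact absurd hy (not_zero w₁)
  · rwa [hy.unique hwu] at hcount

lemma counts_of_den_gt (hyz : FareyNeighbors y z) (hz : SB z w₂) (hy' : ParentWords y w₁)
    (h : z.den < y.den) :
    w₂.count LR.L + 1 = w₁.count LR.L ∧ w₂.count LR.R ≤ w₁.count LR.R := by
  rcases hy'.2 z hyz h with ⟨rfl, -⟩ | ⟨wv, hwv, -, hcount⟩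
  · exact absurd hz (not_one w₂)
  · rwa [hz.unique hwv] at hcount

lemma count_R_eq_zero (h0z : FareyNeighbors 0 z) (hz : SB z w₂) (hz' : ParentWords z w₂) :
    w₂.count LR.R = 0 := by
  have hden : (0 : ℚ).den < z.den :=
    (by simp : (0 : ℚ).den < 2).trans_le (Rat.two_le_den hz.pos.1 hz.pos.2)
  rcases hz'.1 0 h0z hden with ⟨-, h⟩ | ⟨wu, hwu, -⟩
  · exact h
  · exact absurd hwu (not_zero wu)

lemma count_L_eq_zero (hy1 : FareyNeighbors y 1) (hy : SB y w₁) (hy' : ParentWords y w₁) :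
    w₁.count LR.L = 0 := by
  have hden : (1 : ℚ).den < y.den :=
    (by simp : (1 : ℚ).den < 2).trans_le (Rat.two_le_den hy.pos.1 hy.pos.2)
  rcases hy'.2 1 hy1 hden with ⟨-, h⟩ | ⟨wv, hwv, -⟩
  · exact h
  · exact absurd hwv (not_one wv)

lemma parentWords (h : SB x w) : ParentWords x w := by
  induction h with
  | half => exact .of_fareyPair .half (.inl ⟨rfl, rfl⟩) (.inl ⟨rfl, rfl⟩)
  | left y z x w₁ w₂ hp hy hz hlen ih₁ ih₂ =>
    have hyz := hp.num_den.1
    obtain ⟨hR, hL⟩ := counts_of_den_lt hyz hy ih₂ (den_lt_of_length_lt hyz hy hz ih₁ hlen)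
    refine .of_fareyPair hp (.inr ⟨w₁, hy, ?_, ?_, ?_⟩) (.inr ⟨w₂, hz, ?_, ?_, ?_⟩) <;>
      simp <;> omega
  | right y z x w₁ w₂ hp hy hz hlen ih₁ ih₂ =>
    have hyz := hp.num_den.1
    obtain ⟨hL, hR⟩ := counts_of_den_gt hyz hz ih₁ (den_lt_of_length_gt hyz hy ih₂ hlen)
    refine .of_fareyPair hp (.inr ⟨w₁, hy, ?_, ?_, ?_⟩) (.inr ⟨w₂, hz, ?_, ?_, ?_⟩) <;>
      simp <;> omega
  | lbase z x w₂ hp hz ih =>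
    have hR := count_R_eq_zero hp.num_den.1 hz ih
    refine .of_fareyPair hp (.inl ⟨rfl, ?_⟩) (.inr ⟨w₂, hz, ?_, ?_, ?_⟩) <;> simp [hR]
  | rbase y x w₁ hp hy ih =>
    have hL := count_L_eq_zero hp.num_den.1 hy ih
    refine .of_fareyPair hp (.inr ⟨w₁, hy, ?_, ?_, ?_⟩) (.inl ⟨rfl, ?_⟩) <;> simp [hL]

end SB

structure BracketShape (a b : ℤ) (f : LaurentPolynomial ℤ) : Prop where
  coeff_low_ne_zero : f.coeff (-4 * a) ≠ 0
  coeff_high_ne_zero : f.coeff (4 * b) ≠ 0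
  support_subset : ∀ n, f.coeff n ≠ 0 → -4 * a ≤ n ∧ n ≤ 4 * b
  sign : ∀ k : ℤ, (Even k → 0 ≤ f.coeff (4 * k)) ∧ (Odd k → f.coeff (4 * k) ≤ 0)

lemma LaurentPolynomial.coeff_one_of_ne_zero {R : Type*} [Semiring R] {n : ℤ} (hn : n ≠ 0) :
    (1 : R[T;T⁻¹]).coeff n = 0 := by
  rw [AddMonoidAlgebra.one_def, AddMonoidAlgebra.coeff_single, Finsupp.single_eq_of_ne hn]

lemma coeff_fareyStep (f h : LaurentPolynomial ℤ) (n : ℤ) :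
    (-T 4 * f - T (-4) * h).coeff n = -f.coeff (n - 4) - h.coeff (n + 4) := by
  simp only [neg_mul, AddMonoidAlgebra.coeff_sub, AddMonoidAlgebra.coeff_neg, Finsupp.sub_apply,
    Finsupp.neg_apply, T, AddMonoidAlgebra.coeff_single_mul_apply, one_mul]
  ring_nf

namespace BracketShape

variable {a₁ b₁ a₂ b₂ : ℤ} {f h : LaurentPolynomial ℤ}

lemma one : BracketShape 0 0 (1 : LaurentPolynomial ℤ) where
  coeff_low_ne_zero := by simp
  coeff_high_ne_zero := by simp
  support_subset n hn := by
    obtain rfl : n = 0 := not_imp_comm.mp coeff_one_of_ne_zero hn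
    simp
  sign k := by
    rcases eq_or_ne k 0 with rfl | hk
    · simp
    · simp [coeff_one_of_ne_zero, hk]

/-- Both terms of the step contribute to the coefficient of `T (4 * k)` with the sign `(-1) ^ k`,
so they never cancel. -/
lemma sign_fareyStep (hf : BracketShape a₁ b₁ f) (hh : BracketShape a₂ b₂ h) (k : ℤ) :
    (Even k → 0 ≤ (-T 4 * f - T (-4) * h).coeff (4 * k)) ∧
      (Odd k → (-T 4 * f - T (-4) * h).coeff (4 * k) ≤ 0) ∧
      (f.coeff (4 * (k - 1)) ≠ 0 ∨ h.coeff (4 * (k + 1)) ≠ 0 →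
        (-T 4 * f - T (-4) * h).coeff (4 * k) ≠ 0) := by
  rw [coeff_fareyStep, show 4 * k - 4 = 4 * (k - 1) by ring, show 4 * k + 4 = 4 * (k + 1) by ring]
  rcases Int.even_or_odd k with hk | hk
  · have hf' := (hf.sign (k - 1)).2 (hk.sub_odd odd_one)
    have hh' := (hh.sign (k + 1)).2 (hk.add_odd odd_one)
    exact ⟨fun _ => by linarith, fun hk' => absurd hk' (Int.not_odd_iff_even.mpr hk),
      fun _ => by omega⟩
  · have hf' := (hf.sign (k - 1)).1 (hk.sub_odd odd_one)
    have hh' := (hh.sign (k + 1)).1 (hk.add_odd odd_one)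
    exact ⟨fun hk' => absurd hk (Int.not_odd_iff_even.mpr hk'), fun _ => by linarith,
      fun _ => by omega⟩

lemma fareyStep (hf : BracketShape a₁ b₁ f) (hh : BracketShape a₂ b₂ h) (ha : a₁ ≤ a₂ + 2)
    (hb : b₂ ≤ b₁ + 2) : BracketShape (a₂ + 1) (b₁ + 1) (-T 4 * f - T (-4) * h) where
  coeff_low_ne_zero := by
    refine (show -4 * (a₂ + 1) = 4 * (-a₂ - 1) by ring) ▸
      (sign_fareyStep hf hh _).2.2 (.inr ?_)
    rw [show 4 * (-a₂ - 1 + 1) = -4 * a₂ by ring]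
    exact hh.coeff_low_ne_zero
  coeff_high_ne_zero := by
    refine (sign_fareyStep hf hh _).2.2 (.inl ?_)
    rw [add_sub_cancel_right]
    exact hf.coeff_high_ne_zero
  support_subset n hn := by
    rw [coeff_fareyStep] at hn
    by_cases hfn : f.coeff (n - 4) = 0
    · have := hh.support_subset _ (fun hhn => hn (by rw [hfn, hhn]; rfl))
      omega
    · have := hf.support_subset _ hfn
      omega
  sign k := ⟨(sign_fareyStep hf hh k).1, (sign_fareyStep hf hh k).2.1⟩

end BracketShape

theorem SB.bracketShape {g : ℚ → LaurentPolynomial ℤ} (h0 : g 0 = 1) (h1 : g 1 = 1)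
    (hhalf : g (1/2) = -T 4 - T (-4))
    (hrec : ∀ x y z : ℚ, FareyPair y z x → g x = -T 4 * g y - T (-4) * g z)
    {w : List LR} {α : ℚ} (hw : SB α w) :
    BracketShape (w.count LR.L + 1) (w.count LR.R + 1) (g α) := by
  induction hw with
  | half =>
    rw [hhalf]
    simpa using BracketShape.one.fareyStep .one (by norm_num) (by norm_num)
  | left y z x w₁ w₂ hp hy hz hlen ih₁ ih₂ =>
    have hyz := hp.num_den.1
    obtain ⟨hR, hL⟩ := counts_of_den_lt hyz hy hz.parentWords
      (den_lt_of_length_lt hyz hy hz hy.parentWords hlen)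
    rw [hrec x y z hp]
    convert ih₁.fareyStep ih₂ (by omega) (by omega) using 2 <;> simp [← hR]
  | right y z x w₁ w₂ hp hy hz hlen ih₁ ih₂ =>
    have hyz := hp.num_den.1
    obtain ⟨hL, hR⟩ := counts_of_den_gt hyz hz hy.parentWords
      (den_lt_of_length_gt hyz hy hz.parentWords hlen)
    rw [hrec x y z hp]
    convert ih₁.fareyStep ih₂ (by omega) (by omega) using 2 <;> simp [← hL]
  | lbase z x w₂ hp hz ih =>
    have hR := count_R_eq_zero hp.num_den.1 hz hz.parentWords
    rw [hrec x 0 z hp, h0]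
    convert BracketShape.one.fareyStep ih (by omega) (by omega) using 2 <;> simp [hR]
  | rbase y x w₁ hp hy ih =>
    have hL := count_L_eq_zero hp.num_den.1 hy hy.parentWords
    rw [hrec x y 1 hp, h1]
    convert ih.fareyStep BracketShape.one (by omega) (by omega) using 2 <;> simp [hL]

theorem Gamma_degrees_and_signs_general (g : ℚ → LaurentPolynomial ℤ)
    (h0 : g 0 = 1) (h1 : g 1 = 1)
    (hhalf : g (1/2) = -T 4 - T (-4))
    (hrec : ∀ x y z : ℚ, FareyPair y z x → g x = -T 4 * g y - T (-4) * g z)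
    (w : List LR) (α : ℚ) (hw : SB α w) :
    (g α).coeff (-4 * ((w.count LR.L : ℤ) + 1)) ≠ 0 ∧
    (g α).coeff (4 * ((w.count LR.R : ℤ) + 1)) ≠ 0 ∧
    (∀ n : ℤ, (g α).coeff n ≠ 0 →
      -4 * ((w.count LR.L : ℤ) + 1) ≤ n ∧ n ≤ 4 * ((w.count LR.R : ℤ) + 1)) ∧
    (∀ k : ℤ, (g α).coeff (4 * k) ≠ 0 →
      (Even k → 0 < (g α).coeff (4 * k)) ∧ (Odd k → (g α).coeff (4 * k) < 0)) := by
  have hshape := SB.bracketShape h0 h1 hhalf hrec hw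
  refine ⟨hshape.coeff_low_ne_zero, hshape.coeff_high_ne_zero, hshape.support_subset,
    fun k hk => ?_⟩
  exact ⟨fun he => ((hshape.sign k).1 he).lt_of_ne' hk,
    fun ho => ((hshape.sign k).2 ho).lt_of_ne hk⟩

/-- The Kauffman bracket ⟨Γ(w)⟩ of the Conway-Coxeter frieze of an LR word w,
realized as g(α) for α the rational of w, where g = v∘φ satisfies g(0) = g(1) = 1,
the base cases ⟨Γ(ε)⟩ = g(1/2) = -A⁴ - A⁻⁴, ⟨Γ(L)⟩ = g(1/3) = -A⁴ + 1 + A⁻⁸,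
⟨Γ(R)⟩ = g(2/3) = A⁸ + 1 - A⁻⁴, and the Farey-sum recursion
g(x) = -A⁴ g(y) - A⁻⁴ g(z) for parents (y,z).  Then, writing |w|_L, |w|_R for the
numbers of L's and R's in w:
(1) the minimum degree of ⟨Γ(w)⟩ in A is -4(|w|_L + 1) and the maximum degree is
4(|w|_R + 1) (both coefficients are nonzero and all coefficients outside the range
vanish); (2) every nonzero coefficient of A^{4k} has sign (-1)^k. -/
theorem Gamma_degrees_and_signs (g : ℚ → LaurentPolynomial ℤ)
    (h0 : g 0 = 1) (h1 : g 1 = 1)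
    (hhalf : g (1/2) = -T 4 - T (-4))
    (hthird : g (1/3) = -T 4 + 1 + T (-8))
    (h23 : g (2/3) = T 8 + 1 - T (-4))
    (hrec : ∀ x y z : ℚ, FareyPair y z x → g x = -T 4 * g y - T (-4) * g z)
    (w : List LR) (α : ℚ) (hw : SB α w) :
    (g α).coeff (-4 * ((w.count LR.L : ℤ) + 1)) ≠ 0 ∧
    (g α).coeff (4 * ((w.count LR.R : ℤ) + 1)) ≠ 0 ∧
    (∀ n : ℤ, (g α).coeff n ≠ 0 →
      -4 * ((w.count LR.L : ℤ) + 1) ≤ n ∧ n ≤ 4 * ((w.count LR.R : ℤ) + 1)) ∧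
    (∀ k : ℤ, (g α).coeff (4 * k) ≠ 0 →
      (Even k → 0 < (g α).coeff (4 * k)) ∧ (Odd k → (g α).coeff (4 * k) < 0)) :=
  Gamma_degrees_and_signs_general g h0 h1 hhalf hrec w α hw
end
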